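/- arXiv:2105.14964 — 2 statements merged into one kernel-verified Lean document; each statement's English description precedes it below -/
import Mathlib

section
/- Let X and W be independent complex-valued random variables with E[|X|²] ≤ P₁, E[|W|²] ≤ P₂, E[|X|⁴] ≤ 4·P₁², E[|W|⁴] ≤ 4·P₂² (all these moments integrable), let g_x, g_w ∈ ℂ with Re(g_x) ≥ 0 and Re(g_w) ≥ 0, and let N_x, N_w be complex random variables, with (X, W, N_x, N_w) mutually independent, each of N_x, N_w having real and imaginary parts of mean zero and variance σ². Define Ỹ = X + g_x·|W|²·X + N_x and Z̃ = W + g_w·|X|²·W + N_w. Then Var(Re Ỹ) + Var(Im Ỹ) + Var(Re Z̃) + Var(Im Z̃) ≤ 4σ² + (1 + 2·Re(g_x)·P₂ + 4·|g_x|²·P₂²)·P₁ + (1 + 2·Re(g_w)·P₁ + 4·|g_w|²·P₁²)·P₂. -/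
/-!
Write `Ỹ = G·X + Nₓ` with gain `G = 1 + gₓ|W|²`. Since `(X, W)` is independent of `Nₓ`, the
complex variances add, so `Var Ỹ = Var(G·X) + 2σ² ≤ 𝔼|G|²|X|² + 2σ²`. As `G` is a function of `W`,
independence of `X` and `W` factors this as `𝔼|G|² · 𝔼|X|²`, and
`𝔼|G|² = 1 + 2 Re(gₓ) 𝔼|W|² + |gₓ|² 𝔼|W|⁴ ≤ 1 + 2 Re(gₓ) P₂ + 4|gₓ|² P₂²` because `Re gₓ ≥ 0`.
The same bound for `Z̃`, with the roles of the users exchanged, gives the sum.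
-/

open MeasureTheory ProbabilityTheory

section ComplexVariance

variable {Ω : Type*} [MeasurableSpace Ω] {μ : Measure Ω}

/-- The variance `𝔼|S - 𝔼 S|²` of a complex random variable, i.e. the trace of the covariance
matrix of `(Re S, Im S)`. -/
noncomputable def complexVariance (S : Ω → ℂ) (μ : Measure Ω) : ℝ :=
  variance (fun ω => (S ω).re) μ + variance (fun ω => (S ω).im) μ

lemma complexVariance_le_integral_norm_sq [IsProbabilityMeasure μ] {S : Ω → ℂ}
    (hS : MemLp S 2 μ) : complexVariance S μ ≤ ∫ ω, ‖S ω‖ ^ 2 ∂μ := by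
  have hre : Integrable (fun ω => (S ω).re ^ 2) μ := hS.re.integrable_sq
  have him : Integrable (fun ω => (S ω).im ^ 2) μ := hS.im.integrable_sq
  calc complexVariance S μ
      ≤ (∫ ω, (S ω).re ^ 2 ∂μ) + ∫ ω, (S ω).im ^ 2 ∂μ :=
        add_le_add (variance_le_expectation_sq hS.re.1) (variance_le_expectation_sq hS.im.1)
    _ = ∫ ω, ‖S ω‖ ^ 2 ∂μ := by
        rw [← integral_add hre him]
        congr 1 with ω
        rw [Complex.sq_norm, Complex.normSq_apply]
        ring

lemma ProbabilityTheory.IndepFun.complexVariance_add {S N : Ω → ℂ} (h : IndepFun S N μ)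
    (hS : MemLp S 2 μ) (hN : MemLp N 2 μ) :
    complexVariance (S + N) μ = complexVariance S μ + complexVariance N μ := by
  have hre : Var[(fun ω => (S ω).re) + fun ω => (N ω).re; μ] =
      Var[fun ω => (S ω).re; μ] + Var[fun ω => (N ω).re; μ] :=
    (h.comp Complex.measurable_re Complex.measurable_re).variance_add hS.re hN.re
  have him : Var[(fun ω => (S ω).im) + fun ω => (N ω).im; μ] =
      Var[fun ω => (S ω).im; μ] + Var[fun ω => (N ω).im; μ] :=
    (h.comp Complex.measurable_im Complex.measurable_im).variance_add hS.im hN.im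
  show Var[(fun ω => (S ω).re) + fun ω => (N ω).re; μ] +
      Var[(fun ω => (S ω).im) + fun ω => (N ω).im; μ] = _
  rw [hre, him, complexVariance, complexVariance]
  ring

lemma ProbabilityTheory.IndepFun.integrable_sq_norm_mul {A X : Ω → ℂ} (h : IndepFun A X μ)
    (hA : Integrable (fun ω => ‖A ω‖ ^ 2) μ) (hX : Integrable (fun ω => ‖X ω‖ ^ 2) μ) :
    Integrable (fun ω => ‖A ω * X ω‖ ^ 2) μ := by
  have h2 : IndepFun (fun ω => ‖A ω‖ ^ 2) (fun ω => ‖X ω‖ ^ 2) μ :=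
    h.comp (measurable_norm.pow_const 2) (measurable_norm.pow_const 2)
  simpa only [norm_mul, mul_pow, Pi.mul_def] using h2.integrable_mul hA hX

lemma ProbabilityTheory.IndepFun.integral_sq_norm_mul {A X : Ω → ℂ} (h : IndepFun A X μ)
    (hA : AEStronglyMeasurable A μ) (hX : AEStronglyMeasurable X μ) :
    ∫ ω, ‖A ω * X ω‖ ^ 2 ∂μ = (∫ ω, ‖A ω‖ ^ 2 ∂μ) * ∫ ω, ‖X ω‖ ^ 2 ∂μ := by
  have h2 : IndepFun (fun ω => ‖A ω‖ ^ 2) (fun ω => ‖X ω‖ ^ 2) μ :=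
    h.comp (measurable_norm.pow_const 2) (measurable_norm.pow_const 2)
  simpa only [norm_mul, mul_pow, Pi.mul_def] using
    h2.integral_mul_eq_mul_integral (hA.norm.pow 2) (hX.norm.pow 2)

end ComplexVariance

lemma Complex.sq_norm_one_add_mul_ofReal_sq (g : ℂ) (a : ℝ) :
    ‖1 + g * (a : ℂ) ^ 2‖ ^ 2 = 1 + 2 * g.re * a ^ 2 + ‖g‖ ^ 2 * a ^ 4 := by
  simp only [Complex.sq_norm, Complex.normSq_apply, Complex.add_re, Complex.add_im,
    Complex.mul_re, Complex.mul_im, Complex.one_re, Complex.one_im, ← Complex.ofReal_pow,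
    Complex.ofReal_re, Complex.ofReal_im]
  ring

section XPMChannel

variable {Ω : Type*} [MeasurableSpace Ω] {μ : Measure Ω}

lemma integrable_sq_norm_one_add_mul_sq_norm [IsFiniteMeasure μ] (g : ℂ) {W : Ω → ℂ}
    (hW2 : Integrable (fun ω => ‖W ω‖ ^ 2) μ) (hW4 : Integrable (fun ω => ‖W ω‖ ^ 4) μ) :
    Integrable (fun ω => ‖1 + g * (‖W ω‖ : ℂ) ^ 2‖ ^ 2) μ := by
  simp only [Complex.sq_norm_one_add_mul_ofReal_sq]
  exact ((integrable_const 1).add (hW2.const_mul _)).add (hW4.const_mul _)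

lemma integral_sq_norm_one_add_mul_sq_norm [IsProbabilityMeasure μ] (g : ℂ) {W : Ω → ℂ}
    (hW2 : Integrable (fun ω => ‖W ω‖ ^ 2) μ) (hW4 : Integrable (fun ω => ‖W ω‖ ^ 4) μ) :
    ∫ ω, ‖1 + g * (‖W ω‖ : ℂ) ^ 2‖ ^ 2 ∂μ =
      1 + 2 * g.re * ∫ ω, ‖W ω‖ ^ 2 ∂μ + ‖g‖ ^ 2 * ∫ ω, ‖W ω‖ ^ 4 ∂μ := by
  have h2 : Integrable (fun ω => 2 * g.re * ‖W ω‖ ^ 2) μ := hW2.const_mul _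
  have h12 : Integrable (fun ω => 1 + 2 * g.re * ‖W ω‖ ^ 2) μ := (integrable_const 1).add h2
  simp only [Complex.sq_norm_one_add_mul_ofReal_sq]
  rw [integral_add h12 (hW4.const_mul _), integral_add (integrable_const 1) h2,
    integral_const_mul, integral_const_mul]
  simp

theorem complexVariance_xpm_output_le [IsProbabilityMeasure μ] {X W N : Ω → ℂ} {g : ℂ} {P₁ P₂ : ℝ}
    (hXm : AEMeasurable X μ) (hWm : AEMeasurable W μ)
    (hWX : IndepFun W X μ) (hXWN : IndepFun (fun ω => (X ω, W ω)) N μ)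
    (hX2 : Integrable (fun ω => ‖X ω‖ ^ 2) μ) (hW2 : Integrable (fun ω => ‖W ω‖ ^ 2) μ)
    (hW4 : Integrable (fun ω => ‖W ω‖ ^ 4) μ)
    (hP1 : ∫ ω, ‖X ω‖ ^ 2 ∂μ ≤ P₁) (hP2 : ∫ ω, ‖W ω‖ ^ 2 ∂μ ≤ P₂)
    (hP2' : ∫ ω, ‖W ω‖ ^ 4 ∂μ ≤ 4 * P₂ ^ 2) (hg : 0 ≤ g.re) (hN : MemLp N 2 μ) :
    complexVariance (fun ω => X ω + g * (‖W ω‖ : ℂ) ^ 2 * X ω + N ω) μ ≤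
      (1 + 2 * g.re * P₂ + 4 * ‖g‖ ^ 2 * P₂ ^ 2) * P₁ + complexVariance N μ := by
  set G : Ω → ℂ := fun ω => 1 + g * (‖W ω‖ : ℂ) ^ 2
  have hGm : Measurable fun w : ℂ => 1 + g * (‖w‖ : ℂ) ^ 2 := by fun_prop
  have hG : AEStronglyMeasurable G μ := (hGm.comp_aemeasurable hWm).aestronglyMeasurable
  have hGX : IndepFun G X μ := hWX.comp hGm measurable_id
  have hS : MemLp (G * X) 2 μ :=
    (memLp_two_iff_integrable_sq_norm (hG.mul hXm.aestronglyMeasurable)).2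
      (hGX.integrable_sq_norm_mul (integrable_sq_norm_one_add_mul_sq_norm g hW2 hW4) hX2)
  have hSN : IndepFun (G * X) N μ := by
    have hφ : Measurable fun p : ℂ × ℂ => (1 + g * (‖p.2‖ : ℂ) ^ 2) * p.1 := by fun_prop
    exact hXWN.comp hφ measurable_id
  have hG2 : ∫ ω, ‖G ω‖ ^ 2 ∂μ ≤ 1 + 2 * g.re * P₂ + 4 * ‖g‖ ^ 2 * P₂ ^ 2 := by
    rw [integral_sq_norm_one_add_mul_sq_norm g hW2 hW4]
    have := mul_le_mul_of_nonneg_left hP2 (by positivity : 0 ≤ 2 * g.re)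
    have := mul_le_mul_of_nonneg_left hP2' (sq_nonneg ‖g‖)
    linarith
  calc complexVariance (fun ω => X ω + g * (‖W ω‖ : ℂ) ^ 2 * X ω + N ω) μ
      = complexVariance (G * X + N) μ := by
        congr 1 with ω
        simp only [G, Pi.add_apply, Pi.mul_apply]
        ring
    _ = complexVariance (G * X) μ + complexVariance N μ := hSN.complexVariance_add hS hN
    _ ≤ (∫ ω, ‖G ω‖ ^ 2 ∂μ) * (∫ ω, ‖X ω‖ ^ 2 ∂μ) + complexVariance N μ := by
        rw [← hGX.integral_sq_norm_mul hG hXm.aestronglyMeasurable]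
        exact add_le_add_left (complexVariance_le_integral_norm_sq hS) _
    _ ≤ (1 + 2 * g.re * P₂ + 4 * ‖g‖ ^ 2 * P₂ ^ 2) * P₁ + complexVariance N μ := by
        gcongr
        exact (integral_nonneg fun ω => by positivity).trans hG2

end XPMChannel

theorem sum_var_two_user_le_general
    {Ω : Type*} [MeasureSpace Ω] [IsProbabilityMeasure (ℙ : Measure Ω)]
    (X W Nx Nw : Ω → ℂ) (gx gw : ℂ) (P₁ P₂ σ : ℝ)
    (hXm : AEMeasurable X ℙ) (hWm : AEMeasurable W ℙ)
    (hNxm : AEMeasurable Nx ℙ) (hNwm : AEMeasurable Nw ℙ)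
    (hindep : iIndepFun ![X, W, Nx, Nw] ℙ)
    (hX2 : Integrable (fun ω => ‖X ω‖ ^ 2) ℙ)
    (hW2 : Integrable (fun ω => ‖W ω‖ ^ 2) ℙ)
    (hX4 : Integrable (fun ω => ‖X ω‖ ^ 4) ℙ)
    (hW4 : Integrable (fun ω => ‖W ω‖ ^ 4) ℙ)
    (hP1 : (∫ ω, ‖X ω‖ ^ 2) ≤ P₁)
    (hP2 : (∫ ω, ‖W ω‖ ^ 2) ≤ P₂)
    (hP1' : (∫ ω, ‖X ω‖ ^ 4) ≤ 4 * P₁ ^ 2)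
    (hP2' : (∫ ω, ‖W ω‖ ^ 4) ≤ 4 * P₂ ^ 2)
    (hgx : 0 ≤ gx.re) (hgw : 0 ≤ gw.re)
    (hNxre : MemLp (fun ω => (Nx ω).re) 2 ℙ) (hNxim : MemLp (fun ω => (Nx ω).im) 2 ℙ)
    (hNwre : MemLp (fun ω => (Nw ω).re) 2 ℙ) (hNwim : MemLp (fun ω => (Nw ω).im) 2 ℙ)
    (hvxre : variance (fun ω => (Nx ω).re) ℙ = σ ^ 2)
    (hvxim : variance (fun ω => (Nx ω).im) ℙ = σ ^ 2)
    (hvwre : variance (fun ω => (Nw ω).re) ℙ = σ ^ 2)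
    (hvwim : variance (fun ω => (Nw ω).im) ℙ = σ ^ 2)
    (Y Z : Ω → ℂ)
    (hY : ∀ ω, Y ω = X ω + gx * (‖W ω‖ : ℂ) ^ 2 * X ω + Nx ω)
    (hZ : ∀ ω, Z ω = W ω + gw * (‖X ω‖ : ℂ) ^ 2 * W ω + Nw ω) :
    variance (fun ω => (Y ω).re) ℙ + variance (fun ω => (Y ω).im) ℙ +
        variance (fun ω => (Z ω).re) ℙ + variance (fun ω => (Z ω).im) ℙ ≤
      4 * σ ^ 2 +
        (1 + 2 * gx.re * P₂ + 4 * ‖gx‖ ^ 2 * P₂ ^ 2) * P₁ +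
        (1 + 2 * gw.re * P₁ + 4 * ‖gw‖ ^ 2 * P₁ ^ 2) * P₂ := by
  have hXW : IndepFun X W ℙ := hindep.indepFun (show (0 : Fin 4) ≠ 1 by decide)
  have hm : ∀ i, AEMeasurable (![X, W, Nx, Nw] i) ℙ := by
    intro i
    fin_cases i <;> assumption
  have hXWNx : IndepFun (fun ω => (X ω, W ω)) Nx ℙ :=
    hindep.indepFun_prodMk₀ hm 0 1 2 (by decide) (by decide)
  have hWXNw : IndepFun (fun ω => (W ω, X ω)) Nw ℙ :=
    hindep.indepFun_prodMk₀ hm 1 0 3 (by decide) (by decide)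
  have hY_le := complexVariance_xpm_output_le hXm hWm hXW.symm hXWNx hX2 hW2 hW4 hP1 hP2 hP2'
    hgx (memLp_re_im_iff.1 ⟨hNxre, hNxim⟩)
  have hZ_le := complexVariance_xpm_output_le hWm hXm hXW hWXNw hW2 hX2 hX4 hP2 hP1 hP1'
    hgw (memLp_re_im_iff.1 ⟨hNwre, hNwim⟩)
  rw [← funext hY] at hY_le
  rw [← funext hZ] at hZ_le
  simp only [complexVariance, hvxre, hvxim, hvwre, hvwim] at hY_le hZ_le
  linarith

/-- Trace (sum-of-variances) bound, equation (conv6), for the two-user memoryless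
perturbative XPM interference channel `Ỹ = X + gₓ·|W|²·X + Nₓ`,
`Z̃ = W + g_w·|X|²·W + N_w`. -/
theorem sum_var_two_user_le
    {Ω : Type*} [MeasureSpace Ω] [IsProbabilityMeasure (ℙ : Measure Ω)]
    (X W Nx Nw : Ω → ℂ) (gx gw : ℂ) (P₁ P₂ σ : ℝ)
    (hXm : AEMeasurable X ℙ) (hWm : AEMeasurable W ℙ)
    (hNxm : AEMeasurable Nx ℙ) (hNwm : AEMeasurable Nw ℙ)
    (hindep : iIndepFun ![X, W, Nx, Nw] ℙ)
    (hX2 : Integrable (fun ω => ‖X ω‖ ^ 2) ℙ)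
    (hW2 : Integrable (fun ω => ‖W ω‖ ^ 2) ℙ)
    (hX4 : Integrable (fun ω => ‖X ω‖ ^ 4) ℙ)
    (hW4 : Integrable (fun ω => ‖W ω‖ ^ 4) ℙ)
    (hP1 : (∫ ω, ‖X ω‖ ^ 2) ≤ P₁)
    (hP2 : (∫ ω, ‖W ω‖ ^ 2) ≤ P₂)
    (hP1' : (∫ ω, ‖X ω‖ ^ 4) ≤ 4 * P₁ ^ 2)
    (hP2' : (∫ ω, ‖W ω‖ ^ 4) ≤ 4 * P₂ ^ 2)
    (hgx : 0 ≤ gx.re) (hgw : 0 ≤ gw.re)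
    (hNxre : MemLp (fun ω => (Nx ω).re) 2 ℙ) (hNxim : MemLp (fun ω => (Nx ω).im) 2 ℙ)
    (hNwre : MemLp (fun ω => (Nw ω).re) 2 ℙ) (hNwim : MemLp (fun ω => (Nw ω).im) 2 ℙ)
    (hmxre : (∫ ω, (Nx ω).re) = 0) (hmxim : (∫ ω, (Nx ω).im) = 0)
    (hmwre : (∫ ω, (Nw ω).re) = 0) (hmwim : (∫ ω, (Nw ω).im) = 0)
    (hvxre : variance (fun ω => (Nx ω).re) ℙ = σ ^ 2)
    (hvxim : variance (fun ω => (Nx ω).im) ℙ = σ ^ 2)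
    (hvwre : variance (fun ω => (Nw ω).re) ℙ = σ ^ 2)
    (hvwim : variance (fun ω => (Nw ω).im) ℙ = σ ^ 2)
    (Y Z : Ω → ℂ)
    (hY : ∀ ω, Y ω = X ω + gx * (‖W ω‖ : ℂ) ^ 2 * X ω + Nx ω)
    (hZ : ∀ ω, Z ω = W ω + gw * (‖X ω‖ : ℂ) ^ 2 * W ω + Nw ω) :
    variance (fun ω => (Y ω).re) ℙ + variance (fun ω => (Y ω).im) ℙ +
        variance (fun ω => (Z ω).re) ℙ + variance (fun ω => (Z ω).im) ℙ ≤
      4 * σ ^ 2 +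
        (1 + 2 * gx.re * P₂ + 4 * ‖gx‖ ^ 2 * P₂ ^ 2) * P₁ +
        (1 + 2 * gw.re * P₁ + 4 * ‖gw‖ ^ 2 * P₁ ^ 2) * P₂ :=
  sum_var_two_user_le_general X W Nx Nw gx gw P₁ P₂ σ hXm hWm hNxm hNwm hindep hX2 hW2 hX4 hW4 hP1
    hP2 hP1' hP2' hgx hgw hNxre hNxim hNwre hNwim hvxre hvxim hvwre hvwim Y Z hY hZ
end

section
/- Under the same assumptions (X, W independent complex random variables with E[|X|²] ≤ P₁, E[|W|²] ≤ P₂, E[|X|⁴] ≤ 4·P₁², E[|W|⁴] ≤ 4·P₂²; g_x, g_w ∈ ℂ with Re(g_x) ≥ 0, Re(g_w) ≥ 0; N_x, N_w complex noises with (X,W,N_x,N_w) mutually independent and each noise having zero-mean real and imaginary parts of variance σ²; Ỹ = X + g_x·|W|²·X + N_x, Z̃ = W + g_w·|X|²·W + N_w), the determinant of the 4×4 covariance matrix of (Re Ỹ, Im Ỹ, Re Z̃, Im Z̃) satisfies det(cov) ≤ ( σ² + (1/4)·[ (1 + 2·Re(g_x)·P₂ + 4·|g_x|²·P₂²)·P₁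 + (1 + 2·Re(g_w)·P₁ + 4·|g_w|²·P₁²)·P₂ ] )⁴. -/
/-!
The covariance matrix of `(Re Ỹ, Im Ỹ, Re Z̃, Im Z̃)` is positive semidefinite, so AM–GM applied
to its eigenvalues gives `det C ≤ (tr C / 4) ^ 4`, and it remains to bound the trace, the sum of
the four variances. For the first user, `Ỹ = S + Nₓ` with `S = (1 + gₓ|W|²) X` independent of
`Nₓ`, so `Var Re Ỹ + Var Im Ỹ = Var Re S + Var Im S + 2σ² ≤ E|S|² + 2σ²`, and independence of
`X` and `W` factors `E|S|² = E|X|² (1 + 2 Re gₓ E|W|² + |gₓ|² E|W|⁴)`, which the moment bounds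
control by `(1 + 2 Re gₓ P₂ + 4 |gₓ|² P₂²) P₁`. The second user is symmetric.
-/

open MeasureTheory ProbabilityTheory Matrix

theorem Real.prod_le_sum_div_card_pow {ι : Type*} [Fintype ι] {z : ι → ℝ} (hz : ∀ i, 0 ≤ z i) :
    ∏ i, z i ≤ ((∑ i, z i) / Fintype.card ι) ^ Fintype.card ι := by
  rcases isEmpty_or_nonempty ι with hι | hι
  · simp
  set n := Fintype.card ι
  have hn : (n : ℝ) ≠ 0 := by positivity
  have amgm := Real.geom_mean_le_arith_mean_weighted Finset.univ (fun _ => (n : ℝ)⁻¹) z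
    (fun _ _ => by positivity) (by simp [n]) (fun i _ => hz i)
  calc ∏ i, z i = (∏ i, z i ^ (n : ℝ)⁻¹) ^ n := by
        rw [← Finset.prod_pow]
        refine Finset.prod_congr rfl fun i _ => ?_
        rw [← Real.rpow_mul_natCast (hz i), inv_mul_cancel₀ hn, Real.rpow_one]
    _ ≤ (∑ i, (n : ℝ)⁻¹ * z i) ^ n :=
        pow_le_pow_left₀ (Finset.prod_nonneg fun i _ => Real.rpow_nonneg (hz i) _) amgm n
    _ = ((∑ i, z i) / n) ^ n := by rw [← Finset.mul_sum, inv_mul_eq_div]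

theorem Matrix.PosSemidef.det_le_trace_div_card_pow {n : Type*} [Fintype n] [DecidableEq n]
    {A : Matrix n n ℝ} (hA : A.PosSemidef) :
    A.det ≤ (A.trace / Fintype.card n) ^ Fintype.card n := by
  rw [hA.1.det_eq_prod_eigenvalues, hA.1.trace_eq_sum_eigenvalues]
  simpa using Real.prod_le_sum_div_card_pow hA.eigenvalues_nonneg

section CovarianceMatrix

variable {ι Ω : Type*} [Fintype ι] {mΩ : MeasurableSpace Ω} {μ : Measure Ω}

noncomputable def covarianceMatrix (V : ι → Ω → ℝ) (μ : Measure Ω) : Matrix ι ι ℝ :=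
  of fun i j => cov[V i, V j; μ]

lemma posSemidef_covarianceMatrix [IsFiniteMeasure μ] {V : ι → Ω → ℝ}
    (hV : ∀ i, MemLp (V i) 2 μ) : (covarianceMatrix V μ).PosSemidef := by
  refine .of_dotProduct_mulVec_nonneg
    (IsHermitian.ext fun i j => covariance_comm _ _) fun x => ?_
  have hxV : ∀ i, MemLp (fun ω => x i * V i ω) 2 μ := fun i => (hV i).const_mul (x i)
  have hquad : star x ⬝ᵥ (covarianceMatrix V μ *ᵥ x) =
      cov[fun ω => ∑ i, x i * V i ω, fun ω => ∑ j, x j * V j ω; μ] := by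
    rw [covariance_fun_sum_fun_sum hxV hxV]
    simp only [covarianceMatrix, dotProduct, mulVec, of_apply, star_trivial,
      Finset.mul_sum, covariance_const_mul_left, covariance_const_mul_right]
    exact Finset.sum_congr rfl fun i _ => Finset.sum_congr rfl fun j _ => by ring
  exact hquad ▸ integral_nonneg fun _ => mul_self_nonneg _

lemma trace_covarianceMatrix {V : ι → Ω → ℝ} (hV : ∀ i, AEMeasurable (V i) μ) :
    (covarianceMatrix V μ).trace = ∑ i, Var[V i; μ] :=
  Finset.sum_congr rfl fun i _ => covariance_self (hV i)

end CovarianceMatrix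

lemma Complex.sq_norm_one_add_mul_ofReal (g : ℂ) (r : ℝ) :
    ‖1 + g * r‖ ^ 2 = 1 + 2 * g.re * r + ‖g‖ ^ 2 * r ^ 2 := by
  simp only [Complex.sq_norm, Complex.normSq_apply, Complex.add_re, Complex.add_im,
    Complex.mul_re, Complex.mul_im, Complex.ofReal_re, Complex.ofReal_im, Complex.one_re,
    Complex.one_im]
  ring

section Signal

variable {Ω : Type*} {mΩ : MeasurableSpace Ω} {μ : Measure Ω}

noncomputable def xpmSignal (g : ℂ) (X W : Ω → ℂ) : Ω → ℂ :=
  fun ω => X ω + g * (‖W ω‖ : ℂ) ^ 2 * X ω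

lemma sq_norm_xpmSignal (g : ℂ) (X W : Ω → ℂ) (ω : Ω) :
    ‖xpmSignal g X W ω‖ ^ 2 =
      ‖X ω‖ ^ 2 * (1 + 2 * g.re * ‖W ω‖ ^ 2 + ‖g‖ ^ 2 * ‖W ω‖ ^ 4) := by
  have h := Complex.sq_norm_one_add_mul_ofReal g (‖W ω‖ ^ 2)
  rw [show xpmSignal g X W ω = (1 + g * ((‖W ω‖ ^ 2 : ℝ) : ℂ)) * X ω by
    simp only [xpmSignal, Complex.ofReal_pow]; ring, norm_mul, mul_pow, h]
  ring

lemma variance_re_add_variance_im_le [IsProbabilityMeasure μ] {S : Ω → ℂ} (hS : MemLp S 2 μ) :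
    Var[fun ω => (S ω).re; μ] + Var[fun ω => (S ω).im; μ] ≤ ∫ ω, ‖S ω‖ ^ 2 ∂μ := by
  have hre : MemLp (fun ω => (S ω).re) 2 μ := hS.re
  have him : MemLp (fun ω => (S ω).im) 2 μ := hS.im
  calc Var[fun ω => (S ω).re; μ] + Var[fun ω => (S ω).im; μ]
      ≤ ∫ ω, (S ω).re ^ 2 ∂μ + ∫ ω, (S ω).im ^ 2 ∂μ :=
        add_le_add (variance_le_expectation_sq hre.aestronglyMeasurable)
          (variance_le_expectation_sq him.aestronglyMeasurable)
    _ = ∫ ω, ‖S ω‖ ^ 2 ∂μ := by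
        rw [← integral_add hre.integrable_sq him.integrable_sq]
        simp only [Complex.sq_norm, Complex.normSq_apply, ← sq]

lemma ProbabilityTheory.IndepFun.variance_re_add_variance_im_add {S N : Ω → ℂ}
    (h : IndepFun S N μ) (hS : MemLp S 2 μ) (hNre : MemLp (fun ω => (N ω).re) 2 μ)
    (hNim : MemLp (fun ω => (N ω).im) 2 μ) :
    Var[fun ω => (S ω + N ω).re; μ] + Var[fun ω => (S ω + N ω).im; μ] =
      (Var[fun ω => (S ω).re; μ] + Var[fun ω => (S ω).im; μ]) +
        (Var[fun ω => (N ω).re; μ] + Var[fun ω => (N ω).im; μ]) := by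
  have hre : Var[fun ω => (S ω + N ω).re; μ] =
      Var[fun ω => (S ω).re; μ] + Var[fun ω => (N ω).re; μ] :=
    (h.comp Complex.measurable_re Complex.measurable_re).variance_add hS.re hNre
  have him : Var[fun ω => (S ω + N ω).im; μ] =
      Var[fun ω => (S ω).im; μ] + Var[fun ω => (N ω).im; μ] :=
    (h.comp Complex.measurable_im Complex.measurable_im).variance_add hS.im hNim
  rw [hre, him]
  ring

variable {X W : Ω → ℂ}

lemma ProbabilityTheory.IndepFun.xpm_factors (hXW : IndepFun X W μ) (g : ℂ) :
    IndepFun (fun ω => ‖X ω‖ ^ 2)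
      (fun ω => 1 + 2 * g.re * ‖W ω‖ ^ 2 + ‖g‖ ^ 2 * ‖W ω‖ ^ 4) μ :=
  hXW.comp (φ := fun x => ‖x‖ ^ 2) (ψ := fun w => 1 + 2 * g.re * ‖w‖ ^ 2 + ‖g‖ ^ 2 * ‖w‖ ^ 4)
    (by fun_prop) (by fun_prop)

lemma ProbabilityTheory.IndepFun.integrable_sq_norm_xpmSignal [IsFiniteMeasure μ]
    (hXW : IndepFun X W μ) (g : ℂ)
    (hX2 : Integrable (fun ω => ‖X ω‖ ^ 2) μ) (hW2 : Integrable (fun ω => ‖W ω‖ ^ 2) μ)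
    (hW4 : Integrable (fun ω => ‖W ω‖ ^ 4) μ) :
    Integrable (fun ω => ‖xpmSignal g X W ω‖ ^ 2) μ := by
  simp only [sq_norm_xpmSignal]
  exact (hXW.xpm_factors g).integrable_mul hX2
    (((integrable_const 1).add (hW2.const_mul _)).add (hW4.const_mul _))

lemma ProbabilityTheory.IndepFun.integral_sq_norm_xpmSignal [IsProbabilityMeasure μ]
    (hXW : IndepFun X W μ) (g : ℂ)
    (hX2 : Integrable (fun ω => ‖X ω‖ ^ 2) μ) (hW2 : Integrable (fun ω => ‖W ω‖ ^ 2) μ)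
    (hW4 : Integrable (fun ω => ‖W ω‖ ^ 4) μ) :
    ∫ ω, ‖xpmSignal g X W ω‖ ^ 2 ∂μ = (∫ ω, ‖X ω‖ ^ 2 ∂μ) *
      (1 + 2 * g.re * ∫ ω, ‖W ω‖ ^ 2 ∂μ + ‖g‖ ^ 2 * ∫ ω, ‖W ω‖ ^ 4 ∂μ) := by
  have h1W2 : Integrable (fun ω => 1 + 2 * g.re * ‖W ω‖ ^ 2) μ :=
    (integrable_const 1).add (hW2.const_mul _)
  simp only [sq_norm_xpmSignal]
  rw [(hXW.xpm_factors g).integral_fun_mul_eq_mul_integral hX2.aestronglyMeasurable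
      (h1W2.add (hW4.const_mul _)).aestronglyMeasurable,
    integral_add h1W2 (hW4.const_mul _), integral_add (integrable_const 1) (hW2.const_mul _),
    integral_const_mul, integral_const_mul]
  simp

lemma memLp_xpmSignal [IsFiniteMeasure μ] (hXm : AEMeasurable X μ) (hWm : AEMeasurable W μ)
    (hXW : IndepFun X W μ) (g : ℂ) (hX2 : Integrable (fun ω => ‖X ω‖ ^ 2) μ)
    (hW2 : Integrable (fun ω => ‖W ω‖ ^ 2) μ) (hW4 : Integrable (fun ω => ‖W ω‖ ^ 4) μ) :
    MemLp (xpmSignal g X W) 2 μ := by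
  have hSm : AEMeasurable (xpmSignal g X W) μ := by unfold xpmSignal; fun_prop
  exact (memLp_two_iff_integrable_sq_norm hSm.aestronglyMeasurable).2
    (hXW.integrable_sq_norm_xpmSignal g hX2 hW2 hW4)

lemma variance_re_add_variance_im_xpmSignal_add_le [IsProbabilityMeasure μ] {N : Ω → ℂ} {g : ℂ}
    {P Q : ℝ} (hXm : AEMeasurable X μ) (hWm : AEMeasurable W μ) (hXW : IndepFun X W μ)
    (hXWN : IndepFun (fun ω => (X ω, W ω)) N μ) (hX2 : Integrable (fun ω => ‖X ω‖ ^ 2) μ)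
    (hW2 : Integrable (fun ω => ‖W ω‖ ^ 2) μ) (hW4 : Integrable (fun ω => ‖W ω‖ ^ 4) μ)
    (hP : ∫ ω, ‖X ω‖ ^ 2 ∂μ ≤ P) (hQ : ∫ ω, ‖W ω‖ ^ 2 ∂μ ≤ Q)
    (hQ4 : ∫ ω, ‖W ω‖ ^ 4 ∂μ ≤ 4 * Q ^ 2) (hg : 0 ≤ g.re)
    (hNre : MemLp (fun ω => (N ω).re) 2 μ) (hNim : MemLp (fun ω => (N ω).im) 2 μ) :
    Var[fun ω => (xpmSignal g X W ω + N ω).re; μ] +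
        Var[fun ω => (xpmSignal g X W ω + N ω).im; μ] ≤
      (Var[fun ω => (N ω).re; μ] + Var[fun ω => (N ω).im; μ]) +
        (1 + 2 * g.re * Q + 4 * ‖g‖ ^ 2 * Q ^ 2) * P := by
  have hS := memLp_xpmSignal hXm hWm hXW g hX2 hW2 hW4
  have hSN : IndepFun (xpmSignal g X W) N μ :=
    hXWN.comp (φ := fun p : ℂ × ℂ => p.1 + g * (‖p.2‖ : ℂ) ^ 2 * p.1) (ψ := id)
      (by fun_prop) measurable_id
  have hgain : (∫ ω, ‖X ω‖ ^ 2 ∂μ) *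
      (1 + 2 * g.re * ∫ ω, ‖W ω‖ ^ 2 ∂μ + ‖g‖ ^ 2 * ∫ ω, ‖W ω‖ ^ 4 ∂μ) ≤
        P * (1 + 2 * g.re * Q + ‖g‖ ^ 2 * (4 * Q ^ 2)) := by
    gcongr
    exact (integral_nonneg fun _ => by positivity).trans hP
  rw [hSN.variance_re_add_variance_im_add hS hNre hNim]
  linarith [variance_re_add_variance_im_le hS, hXW.integral_sq_norm_xpmSignal g hX2 hW2 hW4]

end Signal

theorem det_cov_two_user_le_general
    {Ω : Type*} [MeasureSpace Ω] [IsProbabilityMeasure (ℙ : Measure Ω)]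
    (X W Nx Nw : Ω → ℂ) (gx gw : ℂ) (P₁ P₂ σ : ℝ)
    (hXm : AEMeasurable X ℙ) (hWm : AEMeasurable W ℙ)
    (hNxm : AEMeasurable Nx ℙ) (hNwm : AEMeasurable Nw ℙ)
    (hindep : iIndepFun ![X, W, Nx, Nw] ℙ)
    (hX2 : Integrable (fun ω => ‖X ω‖ ^ 2) ℙ)
    (hW2 : Integrable (fun ω => ‖W ω‖ ^ 2) ℙ)
    (hX4 : Integrable (fun ω => ‖X ω‖ ^ 4) ℙ)
    (hW4 : Integrable (fun ω => ‖W ω‖ ^ 4) ℙ)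
    (hP1 : (∫ ω, ‖X ω‖ ^ 2) ≤ P₁)
    (hP2 : (∫ ω, ‖W ω‖ ^ 2) ≤ P₂)
    (hP1' : (∫ ω, ‖X ω‖ ^ 4) ≤ 4 * P₁ ^ 2)
    (hP2' : (∫ ω, ‖W ω‖ ^ 4) ≤ 4 * P₂ ^ 2)
    (hgx : 0 ≤ gx.re) (hgw : 0 ≤ gw.re)
    (hNxre : MemLp (fun ω => (Nx ω).re) 2 ℙ) (hNxim : MemLp (fun ω => (Nx ω).im) 2 ℙ)
    (hNwre : MemLp (fun ω => (Nw ω).re) 2 ℙ) (hNwim : MemLp (fun ω => (Nw ω).im) 2 ℙ)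
    (hvxre : variance (fun ω => (Nx ω).re) ℙ = σ ^ 2)
    (hvxim : variance (fun ω => (Nx ω).im) ℙ = σ ^ 2)
    (hvwre : variance (fun ω => (Nw ω).re) ℙ = σ ^ 2)
    (hvwim : variance (fun ω => (Nw ω).im) ℙ = σ ^ 2)
    (Y Z : Ω → ℂ)
    (hY : ∀ ω, Y ω = X ω + gx * (‖W ω‖ : ℂ) ^ 2 * X ω + Nx ω)
    (hZ : ∀ ω, Z ω = W ω + gw * (‖X ω‖ : ℂ) ^ 2 * W ω + Nw ω)
    (V : Fin 4 → Ω → ℝ)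
    (hV : V = ![fun ω => (Y ω).re, fun ω => (Y ω).im,
                fun ω => (Z ω).re, fun ω => (Z ω).im])
    (C : Matrix (Fin 4) (Fin 4) ℝ)
    (hC : ∀ i j, C i j = ∫ ω, (V i ω - ∫ ω', V i ω') * (V j ω - ∫ ω', V j ω')) :
    C.det ≤
      (σ ^ 2 + (1 / 4) *
          ((1 + 2 * gx.re * P₂ + 4 * ‖gx‖ ^ 2 * P₂ ^ 2) * P₁ +
            (1 + 2 * gw.re * P₁ + 4 * ‖gw‖ ^ 2 * P₁ ^ 2) * P₂)) ^ 4 := by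
  have hmeas : ∀ i, AEMeasurable (![X, W, Nx, Nw] i) ℙ := by
    intro i; fin_cases i <;> assumption
  have hXW : IndepFun X W ℙ := hindep.indepFun (i := 0) (j := 1) (by decide)
  have hXWNx : IndepFun (fun ω => (X ω, W ω)) Nx ℙ :=
    hindep.indepFun_prodMk₀ hmeas 0 1 2 (by decide) (by decide)
  have hWXNw : IndepFun (fun ω => (W ω, X ω)) Nw ℙ :=
    hindep.indepFun_prodMk₀ hmeas 1 0 3 (by decide) (by decide)
  obtain rfl : Y = fun ω => xpmSignal gx X W ω + Nx ω := funext hY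
  obtain rfl : Z = fun ω => xpmSignal gw W X ω + Nw ω := funext hZ
  have hSx := memLp_xpmSignal hXm hWm hXW gx hX2 hW2 hW4
  have hSw := memLp_xpmSignal hWm hXm hXW.symm gw hW2 hX2 hX4
  have hVmem : ∀ i, MemLp (V i) 2 ℙ := by
    subst hV
    intro i
    fin_cases i
    exacts [hSx.re.add hNxre, hSx.im.add hNxim, hSw.re.add hNwre, hSw.im.add hNwim]
  have hCV : C = covarianceMatrix V ℙ := Matrix.ext hC
  have htrace : C.trace ≤ 4 * σ ^ 2 + ((1 + 2 * gx.re * P₂ + 4 * ‖gx‖ ^ 2 * P₂ ^ 2) * P₁ +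
      (1 + 2 * gw.re * P₁ + 4 * ‖gw‖ ^ 2 * P₁ ^ 2) * P₂) := by
    rw [hCV, trace_covarianceMatrix fun i => (hVmem i).aemeasurable, Fin.sum_univ_four, hV]
    have h₁ := variance_re_add_variance_im_xpmSignal_add_le hXm hWm hXW hXWNx hX2 hW2 hW4
      hP1 hP2 hP2' hgx hNxre hNxim
    have h₂ := variance_re_add_variance_im_xpmSignal_add_le hWm hXm hXW.symm hWXNw hW2 hX2 hX4
      hP2 hP1 hP1' hgw hNwre hNwim
    simp only [Matrix.cons_val]
    linarith
  have hpsd : C.PosSemidef := hCV ▸ posSemidef_covarianceMatrix hVmem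
  calc C.det ≤ (C.trace / 4) ^ 4 := by simpa using hpsd.det_le_trace_div_card_pow
    _ ≤ _ := by gcongr; exacts [div_nonneg hpsd.trace_nonneg zero_le_four, by linarith]

/-- Equation (conv6): determinant bound on the 4×4 covariance matrix of
`(Re Ỹ, Im Ỹ, Re Z̃, Im Z̃)` for the two-user memoryless perturbative XPM
interference channel `Ỹ = X + gₓ·|W|²·X + Nₓ`, `Z̃ = W + g_w·|X|²·W + N_w`. -/
theorem det_cov_two_user_le
    {Ω : Type*} [MeasureSpace Ω] [IsProbabilityMeasure (ℙ : Measure Ω)]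
    (X W Nx Nw : Ω → ℂ) (gx gw : ℂ) (P₁ P₂ σ : ℝ)
    (hXm : AEMeasurable X ℙ) (hWm : AEMeasurable W ℙ)
    (hNxm : AEMeasurable Nx ℙ) (hNwm : AEMeasurable Nw ℙ)
    (hindep : iIndepFun ![X, W, Nx, Nw] ℙ)
    (hX2 : Integrable (fun ω => ‖X ω‖ ^ 2) ℙ)
    (hW2 : Integrable (fun ω => ‖W ω‖ ^ 2) ℙ)
    (hX4 : Integrable (fun ω => ‖X ω‖ ^ 4) ℙ)
    (hW4 : Integrable (fun ω => ‖W ω‖ ^ 4) ℙ)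
    (hP1 : (∫ ω, ‖X ω‖ ^ 2) ≤ P₁)
    (hP2 : (∫ ω, ‖W ω‖ ^ 2) ≤ P₂)
    (hP1' : (∫ ω, ‖X ω‖ ^ 4) ≤ 4 * P₁ ^ 2)
    (hP2' : (∫ ω, ‖W ω‖ ^ 4) ≤ 4 * P₂ ^ 2)
    (hgx : 0 ≤ gx.re) (hgw : 0 ≤ gw.re)
    (hNxre : MemLp (fun ω => (Nx ω).re) 2 ℙ) (hNxim : MemLp (fun ω => (Nx ω).im) 2 ℙ)
    (hNwre : MemLp (fun ω => (Nw ω).re) 2 ℙ) (hNwim : MemLp (fun ω => (Nw ω).im) 2 ℙ)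
    (hmxre : (∫ ω, (Nx ω).re) = 0) (hmxim : (∫ ω, (Nx ω).im) = 0)
    (hmwre : (∫ ω, (Nw ω).re) = 0) (hmwim : (∫ ω, (Nw ω).im) = 0)
    (hvxre : variance (fun ω => (Nx ω).re) ℙ = σ ^ 2)
    (hvxim : variance (fun ω => (Nx ω).im) ℙ = σ ^ 2)
    (hvwre : variance (fun ω => (Nw ω).re) ℙ = σ ^ 2)
    (hvwim : variance (fun ω => (Nw ω).im) ℙ = σ ^ 2)
    (Y Z : Ω → ℂ)
    (hY : ∀ ω, Y ω = X ω + gx * (‖W ω‖ : ℂ) ^ 2 * X ω + Nx ω)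
    (hZ : ∀ ω, Z ω = W ω + gw * (‖X ω‖ : ℂ) ^ 2 * W ω + Nw ω)
    (V : Fin 4 → Ω → ℝ)
    (hV : V = ![fun ω => (Y ω).re, fun ω => (Y ω).im,
                fun ω => (Z ω).re, fun ω => (Z ω).im])
    (C : Matrix (Fin 4) (Fin 4) ℝ)
    (hC : ∀ i j, C i j = ∫ ω, (V i ω - ∫ ω', V i ω') * (V j ω - ∫ ω', V j ω')) :
    C.det ≤
      (σ ^ 2 + (1 / 4) *
          ((1 + 2 * gx.re * P₂ + 4 * ‖gx‖ ^ 2 * P₂ ^ 2) * P₁ +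
            (1 + 2 * gw.re * P₁ + 4 * ‖gw‖ ^ 2 * P₁ ^ 2) * P₂)) ^ 4 :=
  det_cov_two_user_le_general X W Nx Nw gx gw P₁ P₂ σ hXm hWm hNxm hNwm hindep hX2 hW2 hX4 hW4 hP1
    hP2 hP1' hP2' hgx hgw hNxre hNxim hNwre hNwim hvxre hvxim hvwre hvwim Y Z hY hZ V hV C hC
end
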